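/- arXiv:1112.5737 — 3 statements merged into one kernel-verified Lean document; each statement's English description precedes it below -/
import Mathlib

section
/- Let k ≥ 1 be an integer and let μ be a nice measure on ℝ². Then there exists a convex partition of ℝ² into 2k + 2 parts, each of μ-measure 1/(2k+2), such that every line in ℝ² avoids at least k of the parts. -/
open MeasureTheory Set Metric
open scoped ENNReal
noncomputable section

abbrev Euc (d : ℕ) := EuclideanSpace ℝ (Fin d)

/-- A nice measure on ℝ^d: a probability measure with a continuous,
strictly positive density with respect to Lebesgue measure. -/
def NiceMeasure (d : ℕ) (μ : Measure (Euc d)) : Prop :=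
  IsProbabilityMeasure μ ∧ ∃ f : Euc d → ℝ, Continuous f ∧ (∀ x, 0 < f x) ∧
    μ = volume.withDensity (fun x => ENNReal.ofReal (f x))

/-- The affine hyperplane with normal vector `v` and offset `c`. -/
def Hyperplane {d : ℕ} (v : Euc d) (c : ℝ) : Set (Euc d) := {x | inner (𝕜 := ℝ) v x = c}

/-- A set `H` avoids a set `C` if `H` is disjoint from the interior of `C`. -/
def Avoids {d : ℕ} (H C : Set (Euc d)) : Prop := H ∩ interior C = ∅

/-- A convex partition of ℝ^d into `n` parts: `n` closed convex sets with pairwise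
disjoint interiors whose union is all of ℝ^d. -/
def IsConvexPartition {d n : ℕ} (C : Fin n → Set (Euc d)) : Prop :=
  (∀ i, IsClosed (C i)) ∧ (∀ i, Convex ℝ (C i)) ∧
  (∀ i j, i ≠ j → interior (C i) ∩ interior (C j) = ∅) ∧ (⋃ i, C i) = univ

/-- A `k`-equipartition of `μ` into `n` parts: a convex partition into `n` parts,
each of measure `1/n`, such that every hyperplane avoids at least `k` parts. -/
def IsEquipartition {d n : ℕ} (μ : Measure (Euc d)) (k : ℕ) (C : Fin n → Set (Euc d)) : Prop :=
  IsConvexPartition C ∧ (∀ i, μ (C i) = (n : ℝ≥0∞)⁻¹) ∧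
  ∀ v : Euc d, ∀ c : ℝ, v ≠ 0 → k ≤ {i | Avoids (Hyperplane v c) (C i)}.ncard

/-- Every nice measure on ℝ^d admits a `k`-equipartition into `n` parts. -/
def HasEquipartition (d k n : ℕ) : Prop :=
  ∀ μ : Measure (Euc d), NiceMeasure d μ → ∃ C : Fin n → Set (Euc d), IsEquipartition μ k C

/-- `N_d(k)`: the smallest positive `n` such that every nice measure on ℝ^d admits a
`k`-equipartition into `n` parts. -/
def Nd (d k : ℕ) : ℕ := sInf {n | 0 < n ∧ HasEquipartition d k n}

/-!
Halve `μ` by a line `⟪u, x⟫ = c₀`. Then, k times, find one line that cuts off measure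
`1/(2k+2)` from what is left of each of the two half-planes: for each direction `v` on a path from
`-u` to `u` avoiding `0` there is a unique offset cutting that much off the first remainder, it
depends continuously on `v`, and the intermediate value theorem along the path makes the same cut
work for the second one. Each half-plane is thus peeled into `k + 1` convex pieces of equal measure.
If a line `ℓ` meets the interiors of several pieces of one half-plane, it crosses, inside the open
half-plane, every cut line peeling off one of them except the last; as `ℓ` meets a cut line other
than itself in at most one point, each of the `k` cuts is crossed in at most one of the two
half-planes. So `ℓ` meets
the interiors of at most `k + 2` of the `2k + 2` pieces.
-/

open Filter Topology Module
open scoped RealInnerProductSpace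

namespace Equipartition

def HalfSpace {d : ℕ} (v : Euc d) (c : ℝ) : Set (Euc d) := {x | ⟪v, x⟫ ≤ c}

variable {d : ℕ}

section HalfSpace

variable {v : Euc d} {c : ℝ}

lemma mem_halfSpace {x : Euc d} : x ∈ HalfSpace v c ↔ ⟪v, x⟫ ≤ c := Iff.rfl

lemma mem_halfSpace_neg {x : Euc d} : x ∈ HalfSpace (-v) (-c) ↔ c ≤ ⟪v, x⟫ := by
  simp [HalfSpace, inner_neg_left]

lemma halfSpace_mono {c' : ℝ} (h : c ≤ c') : HalfSpace v c ⊆ HalfSpace v c' :=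
  fun _ hx => le_trans hx h

lemma isClosed_halfSpace (v : Euc d) (c : ℝ) : IsClosed (HalfSpace v c) :=
  isClosed_le (continuous_const.inner continuous_id) continuous_const

lemma measurableSet_halfSpace (v : Euc d) (c : ℝ) : MeasurableSet (HalfSpace v c) :=
  (isClosed_halfSpace v c).measurableSet

lemma convex_halfSpace (v : Euc d) (c : ℝ) : Convex ℝ (HalfSpace v c) :=
  convex_halfSpace_le (innerₛₗ ℝ v).isLinear c

lemma convex_hyperplane (v : Euc d) (c : ℝ) : Convex ℝ (Hyperplane v c) :=
  _root_.convex_hyperplane (innerₛₗ ℝ v).isLinear c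

lemma surjective_innerSL (hv : v ≠ 0) : Function.Surjective (innerSL ℝ v) :=
  fun r => ⟨(r / ⟪v, v⟫) • v, by simp [hv]⟩

lemma interior_halfSpace (hv : v ≠ 0) (c : ℝ) :
    interior (HalfSpace v c) = {x | ⟪v, x⟫ < c} := by
  have h := (innerSL ℝ v).interior_preimage (surjective_innerSL hv) (Iic c)
  rwa [interior_Iic] at h

lemma frontier_halfSpace (hv : v ≠ 0) (c : ℝ) : frontier (HalfSpace v c) = Hyperplane v c := by
  have h := (innerSL ℝ v).frontier_preimage (surjective_innerSL hv) (Iic c)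
  rwa [frontier_Iic] at h

lemma volume_hyperplane (hv : v ≠ 0) (c : ℝ) : volume (Hyperplane v c) = 0 := by
  rw [← frontier_halfSpace hv]
  exact (convex_halfSpace v c).addHaar_frontier volume

lemma disjoint_interior_halfSpace_neg (hv : v ≠ 0) (c : ℝ) :
    Disjoint (interior (HalfSpace (-v) (-c))) (interior (HalfSpace v c)) := by
  rw [interior_halfSpace (neg_ne_zero.2 hv), interior_halfSpace hv]
  refine disjoint_left.2 fun x hx hx' => ?_
  simp only [mem_ofPred_eq, inner_neg_left, neg_lt_neg_iff] at hx hx'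
  exact (lt_asymm hx) hx'

lemma halfSpace_neg_union_halfSpace (v : Euc d) (c : ℝ) :
    HalfSpace (-v) (-c) ∪ HalfSpace v c = univ :=
  eq_univ_of_forall fun x => (le_total c ⟪v, x⟫).imp mem_halfSpace_neg.2 id

lemma inter_halfSpace_neg_eq_empty {c₀ s : ℝ} {R₁ R₂ : Set (Euc d)}
    (h₁ : R₁ ⊆ HalfSpace (-v) (-c₀)) (h₂ : R₂ ⊆ HalfSpace v c₀) (hs : ¬R₁ ⊆ HalfSpace (-v) s) :
    R₂ ∩ HalfSpace (-v) s = ∅ := by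
  have hlt : s < -c₀ := not_le.1 fun h => hs (h₁.trans (halfSpace_mono h))
  refine eq_empty_of_forall_notMem fun x ⟨hx₂, hx⟩ => ?_
  have := mem_halfSpace.1 (h₂ hx₂)
  rw [mem_halfSpace, inner_neg_left] at hx
  linarith

lemma subset_halfSpace_of_inter_nonempty {c₀ s : ℝ} {R₁ R₂ : Set (Euc d)}
    (h₁ : R₁ ⊆ HalfSpace (-v) (-c₀)) (h₂ : R₂ ⊆ HalfSpace v c₀)
    (hs : (R₁ ∩ HalfSpace v s).Nonempty) : R₂ ⊆ HalfSpace v s :=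
  let ⟨_, hx₁, hx⟩ := hs
  h₂.trans (halfSpace_mono ((mem_halfSpace_neg.1 (h₁ hx₁)).trans hx))

end HalfSpace

section Measure

variable {μ : Measure (Euc d)} {A : Set (Euc d)} {v : Euc d}

theorem _root_.NiceMeasure.absolutelyContinuous (hμ : NiceMeasure d μ) : μ ≪ volume := by
  obtain ⟨-, f, -, -, rfl⟩ := hμ
  exact withDensity_absolutelyContinuous _ _

theorem _root_.NiceMeasure.isOpenPosMeasure (hμ : NiceMeasure d μ) : μ.IsOpenPosMeasure := by
  obtain ⟨-, f, hf, hfpos, rfl⟩ := hμ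
  exact (withDensity_absolutelyContinuous' hf.measurable.ennreal_ofReal.aemeasurable
    (ae_of_all _ fun x => (ENNReal.ofReal_pos.2 (hfpos x)).ne')).isOpenPosMeasure

theorem _root_.NiceMeasure.measure_hyperplane (hμ : NiceMeasure d μ) (hv : v ≠ 0) (c : ℝ) :
    μ (Hyperplane v c) = 0 :=
  hμ.absolutelyContinuous (volume_hyperplane hv c)

theorem _root_.NiceMeasure.measure_interior (hμ : NiceMeasure d μ) (hA : Convex ℝ A) :
    μ (interior A) = μ A :=
  measure_interior_of_null_frontier (hμ.absolutelyContinuous (hA.addHaar_frontier volume))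

lemma measure_inter_halfSpace_add {c : ℝ} (hv : μ (Hyperplane v c) = 0) (A : Set (Euc d)) :
    μ (A ∩ HalfSpace v c) + μ (A ∩ HalfSpace (-v) (-c)) = μ A := by
  rw [← measure_inter_add_sdiff A (measurableSet_halfSpace v c)]
  congr 1
  refine le_antisymm ?_ (measure_mono fun x hx => ⟨hx.1, mem_halfSpace_neg.2 (not_le.1 hx.2).le⟩)
  calc μ (A ∩ HalfSpace (-v) (-c)) ≤ μ (A \ HalfSpace v c ∪ Hyperplane v c) := by
        refine measure_mono fun x ⟨hxA, hx⟩ => ?_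
        rcases (mem_halfSpace_neg.1 hx).lt_or_eq with hlt | heq
        · exact Or.inl ⟨hxA, not_le.2 hlt⟩
        · exact Or.inr heq.symm
    _ ≤ μ (A \ HalfSpace v c) + μ (Hyperplane v c) := measure_union_le _ _
    _ = μ (A \ HalfSpace v c) := by rw [hv, add_zero]

lemma continuousAt_measure_inter_halfSpace [IsFiniteMeasure μ] (hA : MeasurableSet A)
    {p : Euc d × ℝ} (hp : μ (Hyperplane p.1 p.2) = 0) :
    ContinuousAt (fun q : Euc d × ℝ => μ (A ∩ HalfSpace q.1 q.2)) p := by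
  refine tendsto_measure_of_ae_tendsto_indicator_of_isFiniteMeasure (𝓝 p)
    (hA.inter (measurableSet_halfSpace _ _)) (fun q => hA.inter (measurableSet_halfSpace _ _)) ?_
  filter_upwards [measure_eq_zero_iff_ae_notMem.1 hp] with x hx
  have hcont : Continuous fun q : Euc d × ℝ => ⟪q.1, x⟫ - q.2 := by fun_prop
  rcases lt_or_gt_of_ne (sub_ne_zero.2 hx) with h | h
  · filter_upwards [(hcont.tendsto p).eventually_lt_const h] with q hq
    simp only [HalfSpace, mem_inter_iff, mem_ofPred_eq]
    constructor <;> rintro ⟨hxA, -⟩ <;> exact ⟨hxA, by linarith⟩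
  · filter_upwards [(hcont.tendsto p).eventually_const_lt h] with q hq
    simp only [HalfSpace, mem_inter_iff, mem_ofPred_eq]
    constructor <;> rintro ⟨-, h'⟩ <;> linarith

lemma exists_measure_inter_halfSpace_eq [IsFiniteMeasure μ] (hA : MeasurableSet A)
    (hv : ∀ c, μ (Hyperplane v c) = 0) {t : ℝ≥0∞} (ht : 0 < t) (htA : t < μ A) :
    ∃ s, μ (A ∩ HalfSpace v s) = t := by
  have hcont : Continuous fun s => μ (A ∩ HalfSpace v s) :=
    continuous_iff_continuousAt.2 fun s =>
      (continuousAt_measure_inter_halfSpace (p := (v, s)) hA (hv s)).comp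
        (by fun_prop : Continuous fun s : ℝ => (v, s)).continuousAt
  have hbot : Tendsto (fun s => μ (A ∩ HalfSpace v (-s))) atTop (𝓝 0) := by
    have hempty : (⋂ s : ℝ, A ∩ HalfSpace v (-s)) = ∅ :=
      eq_empty_of_forall_notMem fun x hx =>
        (mem_halfSpace.1 (mem_iInter.1 hx (-⟪v, x⟫ + 1)).2).not_gt (by linarith)
    simpa [hempty, Function.comp_def] using tendsto_measure_iInter_atTop
      (fun s => (hA.inter (measurableSet_halfSpace v _)).nullMeasurableSet)
      (fun s s' h => inter_subset_inter_right A (halfSpace_mono (neg_le_neg h)))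
      ⟨0, measure_ne_top μ _⟩
  have htop : Tendsto (fun s => μ (A ∩ HalfSpace v s)) atTop (𝓝 (μ A)) := by
    have hunion : (⋃ s : ℝ, A ∩ HalfSpace v s) = A :=
      subset_antisymm (iUnion_subset fun _ => inter_subset_left)
        fun x hxA => mem_iUnion.2 ⟨⟪v, x⟫, hxA, mem_halfSpace.2 le_rfl⟩
    simpa [hunion, Function.comp_def] using tendsto_measure_iUnion_atTop (μ := μ)
      fun s s' h => inter_subset_inter_right A (halfSpace_mono (v := v) h)
  obtain ⟨s₁, hs₁⟩ := (hbot.eventually_lt_const ht).exists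
  obtain ⟨s₂, hs₂⟩ := (htop.eventually_const_lt htA).exists
  exact intermediate_value_univ (-s₁) s₂ hcont ⟨hs₁.le, hs₂.le⟩

lemma exists_halfSpace_neg_measure_eq (hμ : NiceMeasure d μ) (hv : v ≠ 0) {T : ℝ≥0∞}
    (hT : T + T = 1) : ∃ c, μ (HalfSpace (-v) (-c)) = T ∧ μ (HalfSpace v c) = T := by
  have := hμ.1
  have hT₀ : T ≠ 0 := by rintro rfl; simp at hT
  have hT_top : T ≠ ⊤ := ne_top_of_le_ne_top ENNReal.one_ne_top (hT ▸ le_self_add)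
  obtain ⟨c, hc⟩ := exists_measure_inter_halfSpace_eq MeasurableSet.univ
    (hμ.measure_hyperplane hv) (pos_iff_ne_zero.2 hT₀)
    (by rw [measure_univ, ← hT]; exact ENNReal.lt_add_right hT_top hT₀)
  have hsum := measure_inter_halfSpace_add (hμ.measure_hyperplane hv c) univ
  rw [univ_inter] at hc hsum
  rw [univ_inter, hc, measure_univ, ← hT] at hsum
  exact ⟨c, (ENNReal.add_right_inj hT_top).1 hsum, hc⟩

lemma measure_inter_halfSpace_lt (hμ : NiceMeasure d μ) (hA : Convex ℝ A) (hv : v ≠ 0)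
    {s s' : ℝ} (hss' : s < s') (h₀ : μ (A ∩ HalfSpace v s) ≠ 0)
    (h₁ : μ (A ∩ HalfSpace v s') ≠ μ A) :
    μ (A ∩ HalfSpace v s) < μ (A ∩ HalfSpace v s') := by
  have := hμ.1
  have := hμ.isOpenPosMeasure
  have hint : ∀ {w : Euc d} {r : ℝ}, w ≠ 0 → μ (A ∩ HalfSpace w r) ≠ 0 →
      ∃ a ∈ interior A, ⟪w, a⟫ < r := fun {w r} hw h => by
    rw [← hμ.measure_interior (hA.inter (convex_halfSpace w r))] at h
    obtain ⟨a, ha⟩ := nonempty_of_measure_ne_zero h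
    rw [interior_inter, interior_halfSpace hw] at ha
    exact ⟨a, ha⟩
  obtain ⟨a, ha, has⟩ := hint hv h₀
  obtain ⟨b, hb, hbs⟩ := hint (neg_ne_zero.2 hv) (r := -s') fun h => h₁ <| by
    rw [← measure_inter_halfSpace_add (hμ.measure_hyperplane hv s') A, h, add_zero]
  rw [inner_neg_left, neg_lt_neg_iff] at hbs
  obtain ⟨z, hz, hzs⟩ := hA.interior.isPreconnected.intermediate_value ha hb
    (f := fun x => ⟪v, x⟫) (continuous_const.inner continuous_id).continuousOn
    (show (s + s') / 2 ∈ Icc ⟪v, a⟫ ⟪v, b⟫ by constructor <;> linarith)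
  -- the open slab between the two levels inside `interior A` contains `z`
  set U := interior A ∩ ({x | s < ⟪v, x⟫} ∩ {x | ⟪v, x⟫ < s'})
  have hU : IsOpen U := isOpen_interior.inter
    ((isOpen_lt continuous_const (by fun_prop)).inter (isOpen_lt (by fun_prop) continuous_const))
  have hUpos : μ U ≠ 0 :=
    hU.measure_ne_zero μ ⟨z, hz, show s < ⟪v, z⟫ by linarith, show ⟪v, z⟫ < s' by linarith⟩
  have hdisj : Disjoint (A ∩ HalfSpace v s) U :=
    disjoint_left.2 fun x hx hxU => (not_lt.2 (mem_halfSpace.1 hx.2)) hxU.2.1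
  calc μ (A ∩ HalfSpace v s) < μ (A ∩ HalfSpace v s) + μ U :=
        ENNReal.lt_add_right (measure_ne_top μ _) hUpos
    _ = μ (A ∩ HalfSpace v s ∪ U) := (measure_union hdisj hU.measurableSet).symm
    _ ≤ μ (A ∩ HalfSpace v s') := measure_mono <| union_subset
          (inter_subset_inter_right _ (halfSpace_mono hss'.le))
          fun x hx => ⟨interior_subset hx.1, mem_halfSpace.2 (le_of_lt hx.2.2)⟩

variable {s₀ s : ℝ} {t : ℝ≥0∞}

lemma measure_inter_halfSpace_lt_of_lt (hμ : NiceMeasure d μ) (hA : Convex ℝ A) (hv : v ≠ 0)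
    (hs₀ : μ (A ∩ HalfSpace v s₀) = t) (ht : 0 < t) (htA : t < μ A) (hs : s < s₀) :
    μ (A ∩ HalfSpace v s) < t := by
  by_contra! h
  exact (measure_inter_halfSpace_lt hμ hA hv hs (ht.trans_le h).ne' (hs₀ ▸ htA.ne)).not_ge
    (hs₀ ▸ h)

lemma lt_measure_inter_halfSpace_of_lt (hμ : NiceMeasure d μ) (hA : Convex ℝ A) (hv : v ≠ 0)
    (hs₀ : μ (A ∩ HalfSpace v s₀) = t) (ht : 0 < t) (htA : t < μ A) (hs : s₀ < s) :
    t < μ (A ∩ HalfSpace v s) := by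
  rcases (measure_mono (μ := μ) (inter_subset_left (t := HalfSpace v s))).lt_or_eq with h | h
  · exact hs₀ ▸ measure_inter_halfSpace_lt hμ hA hv hs (hs₀ ▸ ht.ne') h.ne
  · exact h ▸ htA

end Measure

lemma continuous_of_lt_of_gt {X α : Type*} [TopologicalSpace X] [TopologicalSpace α]
    [LinearOrder α] [OrderClosedTopology α] {F : X → ℝ → α} {g : X → ℝ} {t : α}
    (hF : ∀ s, Continuous fun x => F x s) (hlt : ∀ x s, s < g x → F x s < t)
    (hgt : ∀ x s, g x < s → t < F x s) : Continuous g := by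
  refine continuous_iff_continuousAt.2 fun x => tendsto_order.2 ⟨fun a ha => ?_, fun a ha => ?_⟩
  · obtain ⟨b, hab, hb⟩ := exists_between ha
    filter_upwards [((hF b).tendsto x).eventually_lt_const (hlt x b hb)] with y hy
    exact hab.trans_le (not_lt.1 fun h => (hgt y b h).not_gt hy)
  · obtain ⟨b, hb, hba⟩ := exists_between ha
    filter_upwards [((hF b).tendsto x).eventually_const_lt (hgt x b hb)] with y hy
    exact (not_lt.1 fun h => (hlt y b h).not_gt hy).trans_lt hba

theorem exists_halfSpace_measure_inter_eq_measure_inter_eq {μ : Measure (Euc d)}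
    (hμ : NiceMeasure d μ) {u : Euc d} (hu : JoinedIn {0}ᶜ (-u) u) {c₀ : ℝ}
    {R₁ R₂ : Set (Euc d)} (hR₁ : IsClosed R₁) (hR₁c : Convex ℝ R₁) (hR₂ : MeasurableSet R₂)
    (h₁ : R₁ ⊆ HalfSpace (-u) (-c₀)) (h₂ : R₂ ⊆ HalfSpace u c₀) {t : ℝ≥0∞} (ht : 0 < t)
    (ht₁ : t < μ R₁) (ht₂ : t < μ R₂) :
    ∃ v ≠ 0, ∃ s, μ (R₁ ∩ HalfSpace v s) = t ∧ μ (R₂ ∩ HalfSpace v s) = t := by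
  have := hμ.1
  obtain ⟨γ, hγ⟩ := hu
  replace hγ : ∀ θ, γ θ ≠ 0 := hγ
  choose σ hσ using fun θ => exists_measure_inter_halfSpace_eq hR₁.measurableSet
    (hμ.measure_hyperplane (hγ θ)) ht ht₁
  have hcont : ∀ {R : Set (Euc d)}, MeasurableSet R → ∀ {f : unitInterval → ℝ}, Continuous f →
      Continuous fun θ => μ (R ∩ HalfSpace (γ θ) (f θ)) := fun hR f hf =>
    continuous_iff_continuousAt.2 fun θ =>
      (continuousAt_measure_inter_halfSpace (p := (γ θ, f θ)) hR
        (hμ.measure_hyperplane (hγ θ) _)).comp (f := fun θ => (γ θ, f θ))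
        (γ.continuous.prodMk hf).continuousAt
  have hσ_cont : Continuous σ :=
    continuous_of_lt_of_gt (fun s => hcont hR₁.measurableSet continuous_const)
      (fun θ s => measure_inter_halfSpace_lt_of_lt hμ hR₁c (hγ θ) (hσ θ) ht ht₁)
      (fun θ s => lt_measure_inter_halfSpace_of_lt hμ hR₁c (hγ θ) (hσ θ) ht ht₁)
  have hψ₀ : R₂ ∩ HalfSpace (γ 0) (σ 0) = ∅ := by
    have hσ₀ := hσ 0
    rw [γ.source] at hσ₀ ⊢
    exact inter_halfSpace_neg_eq_empty h₁ h₂ fun h => ht₁.ne' (inter_eq_left.2 h ▸ hσ₀)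
  have hψ₁ : R₂ ⊆ HalfSpace (γ 1) (σ 1) := by
    have hσ₁ := hσ 1
    rw [γ.target] at hσ₁ ⊢
    exact subset_halfSpace_of_inter_nonempty h₁ h₂ (nonempty_of_measure_ne_zero (hσ₁ ▸ ht.ne'))
  obtain ⟨θ, hθ⟩ := intermediate_value_univ 0 1 (hcont hR₂ hσ_cont) <| show t ∈ Icc
      (μ (R₂ ∩ HalfSpace (γ 0) (σ 0))) (μ (R₂ ∩ HalfSpace (γ 1) (σ 1))) by
    rw [hψ₀, measure_empty, inter_eq_left.2 hψ₁]
    exact ⟨zero_le, ht₂.le⟩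
  exact ⟨γ θ, hγ θ, σ θ, hσ θ, hθ⟩

/-- The pieces of `S` obtained by cutting off, in turn, the half-space `HalfSpace (w j).1 (w j).2`
of what is left, for `j = 0, …, k - 1`; the last piece `cutPiece k S w k` is what remains. -/
def cutPiece : ℕ → Set (Euc d) → (ℕ → Euc d × ℝ) → ℕ → Set (Euc d)
  | 0, S, _, _ => S
  | _ + 1, S, w, 0 => S ∩ HalfSpace (w 0).1 (w 0).2
  | k + 1, S, w, i + 1 => cutPiece k (S ∩ HalfSpace (-(w 0).1) (-(w 0).2)) (fun j => w (j + 1)) i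

lemma isClosed_cutPiece :
    ∀ (k : ℕ) {S : Set (Euc d)}, IsClosed S → ∀ w i, IsClosed (cutPiece k S w i)
  | 0, _, hS, _, _ => hS
  | _ + 1, _, hS, _, 0 => hS.inter (isClosed_halfSpace _ _)
  | k + 1, _, hS, _, i + 1 => isClosed_cutPiece k (hS.inter (isClosed_halfSpace _ _)) _ i

lemma convex_cutPiece :
    ∀ (k : ℕ) {S : Set (Euc d)}, Convex ℝ S → ∀ w i, Convex ℝ (cutPiece k S w i)
  | 0, _, hS, _, _ => hS
  | _ + 1, _, hS, _, 0 => hS.inter (convex_halfSpace _ _)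
  | k + 1, _, hS, _, i + 1 => convex_cutPiece k (hS.inter (convex_halfSpace _ _)) _ i

lemma cutPiece_subset : ∀ (k : ℕ) (S : Set (Euc d)) (w i), cutPiece k S w i ⊆ S
  | 0, _, _, _ => subset_rfl
  | _ + 1, _, _, 0 => inter_subset_left
  | k + 1, _, _, i + 1 => (cutPiece_subset k _ _ i).trans inter_subset_left

lemma exists_mem_cutPiece : ∀ (k : ℕ) {S : Set (Euc d)} (w) {x : Euc d}, x ∈ S →
    ∃ i ≤ k, x ∈ cutPiece k S w i
  | 0, _, _, _, hx => ⟨0, le_rfl, hx⟩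
  | k + 1, S, w, x, hx => by
    by_cases h : ⟪(w 0).1, x⟫ ≤ (w 0).2
    · exact ⟨0, k.succ.zero_le, hx, h⟩
    · obtain ⟨i, hi, hxi⟩ := exists_mem_cutPiece k (S := S ∩ HalfSpace (-(w 0).1) (-(w 0).2))
        (fun j => w (j + 1)) ⟨hx, mem_halfSpace_neg.2 (not_le.1 h).le⟩
      exact ⟨i + 1, by omega, hxi⟩

lemma iUnion_cutPiece (k : ℕ) (S : Set (Euc d)) (w : ℕ → Euc d × ℝ) :
    ⋃ i : Fin (k + 1), cutPiece k S w i = S :=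
  subset_antisymm (iUnion_subset fun i => cutPiece_subset k S w i) fun x hx =>
    let ⟨i, hi, hxi⟩ := exists_mem_cutPiece k w hx
    mem_iUnion.2 ⟨⟨i, by omega⟩, hxi⟩

lemma disjoint_interior_cutPiece : ∀ (k : ℕ) (S : Set (Euc d)) (w : ℕ → Euc d × ℝ),
    (∀ j < k, (w j).1 ≠ 0) → ∀ i j, i < j → j ≤ k →
    Disjoint (interior (cutPiece k S w i)) (interior (cutPiece k S w j))
  | 0, _, _, _, _, _, hij, hj => by omega
  | k + 1, S, w, hw, 0, j + 1, _, _ => by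
    refine disjoint_left.2 fun x hx hx' => ?_
    have h₁ := interior_mono inter_subset_right hx
    have h₂ := interior_mono ((cutPiece_subset k _ _ j).trans inter_subset_right) hx'
    rw [interior_halfSpace (hw 0 k.succ_pos)] at h₁
    rw [interior_halfSpace (neg_ne_zero.2 (hw 0 k.succ_pos))] at h₂
    simp only [mem_ofPred_eq, inner_neg_left, neg_lt_neg_iff] at h₁ h₂
    exact (lt_asymm h₁) h₂
  | k + 1, S, w, hw, i + 1, j + 1, hij, hj =>
    disjoint_interior_cutPiece k _ _ (fun l hl => hw (l + 1) (by omega)) i j (by omega) (by omega)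

lemma pairwise_disjoint_interior_cutPiece {k : ℕ} (S : Set (Euc d)) {w : ℕ → Euc d × ℝ}
    (hw : ∀ j < k, (w j).1 ≠ 0) :
    Pairwise fun i j : Fin (k + 1) =>
      Disjoint (interior (cutPiece k S w i)) (interior (cutPiece k S w j)) := by
  intro i j hij
  rcases (Fin.val_injective.ne hij).lt_or_gt with h | h
  · exact disjoint_interior_cutPiece k S w hw i j h (by omega)
  · exact (disjoint_interior_cutPiece k S w hw j i h (by omega)).symm

theorem exists_cutPiece_measure_eq {μ : Measure (Euc d)} (hμ : NiceMeasure d μ) {u : Euc d}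
    (hu : JoinedIn {0}ᶜ (-u) u) {c₀ : ℝ} {t : ℝ≥0∞} (ht : 0 < t) (ht' : t ≠ ⊤) :
    ∀ (k : ℕ) {R₁ R₂ : Set (Euc d)}, IsClosed R₁ → Convex ℝ R₁ → MeasurableSet R₂ →
    R₁ ⊆ HalfSpace (-u) (-c₀) → R₂ ⊆ HalfSpace u c₀ →
    μ R₁ = (k + 1) * t → μ R₂ = (k + 1) * t →
    ∃ w : ℕ → Euc d × ℝ, (∀ j < k, (w j).1 ≠ 0) ∧
      ∀ i ≤ k, μ (cutPiece k R₁ w i) = t ∧ μ (cutPiece k R₂ w i) = t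
  | 0, R₁, R₂, _, _, _, _, _, h₁, h₂ => ⟨fun _ => 0, fun j hj => absurd hj j.not_lt_zero,
      fun i _ => by simpa [cutPiece] using And.intro h₁ h₂⟩
  | k + 1, R₁, R₂, hR₁, hR₁c, hR₂, hsub₁, hsub₂, h₁, h₂ => by
    have hsplit : ((k + 1 : ℕ) + 1 : ℝ≥0∞) * t = t + (k + 1) * t := by push_cast; ring
    have hlt : ∀ {R : Set (Euc d)}, μ R = ((k + 1 : ℕ) + 1) * t → t < μ R := fun hR => by
      rw [hR, hsplit]
      exact ENNReal.lt_add_right ht' (mul_ne_zero (by positivity) ht.ne')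
    obtain ⟨v, hv, s, hs₁, hs₂⟩ := exists_halfSpace_measure_inter_eq_measure_inter_eq hμ hu hR₁
      hR₁c hR₂ hsub₁ hsub₂ ht (hlt h₁) (hlt h₂)
    have hrest : ∀ {R : Set (Euc d)}, μ R = ((k + 1 : ℕ) + 1) * t → μ (R ∩ HalfSpace v s) = t →
        μ (R ∩ HalfSpace (-v) (-s)) = (k + 1) * t := fun {R} hR hRs => by
      have := measure_inter_halfSpace_add (hμ.measure_hyperplane hv s) R
      rw [hRs, hR, hsplit] at this
      exact (ENNReal.add_right_inj ht').1 this
    obtain ⟨w, hw, hwμ⟩ := exists_cutPiece_measure_eq hμ hu ht ht' k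
      (hR₁.inter (isClosed_halfSpace _ _)) (hR₁c.inter (convex_halfSpace _ _))
      (hR₂.inter (measurableSet_halfSpace _ _)) (inter_subset_left.trans hsub₁)
      (inter_subset_left.trans hsub₂) (hrest h₁ hs₁) (hrest h₂ hs₂)
    exact ⟨fun | 0 => (v, s) | j + 1 => w j, fun | 0, _ => hv | j + 1, hj => hw j (by omega),
      fun | 0, _ => ⟨hs₁, hs₂⟩ | i + 1, hi => hwμ i (by omega)⟩

def CrossesWithin (ℓ H U : Set (Euc d)) : Prop := (ℓ ∩ U ∩ H).Nonempty ∧ ¬ℓ ⊆ H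

lemma CrossesWithin.mono {ℓ H U U' : Set (Euc d)} (h : CrossesWithin ℓ H U) (hU : U ⊆ U') :
    CrossesWithin ℓ H U' :=
  ⟨h.1.mono (inter_subset_inter_left _ (inter_subset_inter_right _ hU)), h.2⟩

lemma crossesWithin_of_meets_interior {ℓ S : Set (Euc d)} (hℓ : Convex ℝ ℓ) (hS : Convex ℝ S)
    {v : Euc d} (hv : v ≠ 0) {s : ℝ} (h₁ : (ℓ ∩ interior (S ∩ HalfSpace v s)).Nonempty)
    (h₂ : (ℓ ∩ interior (S ∩ HalfSpace (-v) (-s))).Nonempty) :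
    CrossesWithin ℓ (Hyperplane v s) (interior S) := by
  obtain ⟨a, haℓ, ha⟩ := h₁
  obtain ⟨b, hbℓ, hb⟩ := h₂
  rw [interior_inter, interior_halfSpace hv] at ha
  rw [interior_inter, interior_halfSpace (neg_ne_zero.2 hv)] at hb
  have hbs : s < ⟪v, b⟫ := by
    have := hb.2
    rw [mem_ofPred_eq, inner_neg_left] at this
    linarith
  obtain ⟨z, hz, hzs⟩ := (hℓ.inter hS.interior).isPreconnected.intermediate_value ⟨haℓ, ha.1⟩
    ⟨hbℓ, hb.1⟩ (f := fun x => ⟪v, x⟫) (continuous_const.inner continuous_id).continuousOn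
    (show s ∈ Icc ⟪v, a⟫ ⟪v, b⟫ from ⟨ha.2.le, hbs.le⟩)
  exact ⟨⟨z, hz, hzs⟩, fun h => (h haℓ : ⟪v, a⟫ = s).not_lt ha.2⟩

section Counting

open Finset
open scoped Classical

lemma card_meets_interior_cutPiece_le {ℓ U : Set (Euc d)} (hℓ : Convex ℝ ℓ) :
    ∀ (k : ℕ) {S : Set (Euc d)} (w : ℕ → Euc d × ℝ), Convex ℝ S → interior S ⊆ U →
    (∀ j < k, (w j).1 ≠ 0) →
    #{i : Fin (k + 1) | (ℓ ∩ interior (cutPiece k S w i)).Nonempty} ≤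
      #{j : Fin k | CrossesWithin ℓ (Hyperplane (w j).1 (w j).2) U} + 1
  | 0, _, _, _, _, _ => (card_filter_le _ _).trans (by simp)
  | k + 1, S, w, hS, hSU, hw => by
    set S' := S ∩ HalfSpace (-(w 0).1) (-(w 0).2)
    have ih := card_meets_interior_cutPiece_le hℓ k (S := S') (fun j => w (j + 1))
      (hS.inter (convex_halfSpace _ _)) ((interior_mono Set.inter_subset_left).trans hSU)
      fun j hj => hw (j + 1) (by omega)
    -- meeting the first piece and a later one forces `ℓ` across the first cut
    have hcross : (ℓ ∩ interior (S ∩ HalfSpace (w 0).1 (w 0).2)).Nonempty →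
        (∃ i : Fin (k + 1), (ℓ ∩ interior (cutPiece k S' (fun j => w (j + 1)) i)).Nonempty) →
        CrossesWithin ℓ (Hyperplane (w 0).1 (w 0).2) U := fun h₁ ⟨i, hi⟩ =>
      (crossesWithin_of_meets_interior hℓ hS (hw 0 k.succ_pos) h₁ (hi.mono
        (inter_subset_inter_right ℓ (interior_mono (cutPiece_subset k _ _ i))))).mono hSU
    calc _ = (if (ℓ ∩ interior (S ∩ HalfSpace (w 0).1 (w 0).2)).Nonempty then 1 else 0) +
          #{i : Fin (k + 1) | (ℓ ∩ interior (cutPiece k S' (fun j => w (j + 1)) i)).Nonempty} :=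
          Fin.card_filter_univ_succ' _
      _ ≤ (if CrossesWithin ℓ (Hyperplane (w 0).1 (w 0).2) U then 1 else 0) +
          #{j : Fin k | CrossesWithin ℓ (Hyperplane (w (j + 1)).1 (w (j + 1)).2) U} + 1 := by
          rcases Nat.eq_zero_or_pos
            #{i : Fin (k + 1) | (ℓ ∩ interior (cutPiece k S' (fun j => w (j + 1)) i)).Nonempty}
            with h₀ | hpos
          · split_ifs <;> omega
          · obtain ⟨i, hi⟩ := card_pos.1 hpos
            split_ifs with h₁ h₂ <;>
              first | omega | exact absurd (hcross h₁ ⟨i, (mem_filter.1 hi).2⟩) h₂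
      _ = _ := congrArg (· + 1)
          (Fin.card_filter_univ_succ' fun j : Fin (k + 1) =>
            CrossesWithin ℓ (Hyperplane (w j).1 (w j).2) U).symm

end Counting

def sidePieces (k : ℕ) (S₁ S₂ : Set (Euc d)) (w : ℕ → Euc d × ℝ) :
    Fin (k + 1) ⊕ Fin (k + 1) → Set (Euc d) :=
  Sum.elim (fun i => cutPiece k S₁ w i) (fun i => cutPiece k S₂ w i)

lemma pairwise_disjoint_interior_sidePieces {k : ℕ} {S₁ S₂ : Set (Euc d)}
    (hS : Disjoint (interior S₁) (interior S₂)) {w : ℕ → Euc d × ℝ} (hw : ∀ j < k, (w j).1 ≠ 0) :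
    Pairwise fun p q =>
      Disjoint (interior (sidePieces k S₁ S₂ w p)) (interior (sidePieces k S₁ S₂ w q)) := by
  rintro (i | i) (j | j) hij
  · exact pairwise_disjoint_interior_cutPiece S₁ hw fun h => hij (congrArg _ h)
  · exact hS.mono (interior_mono (cutPiece_subset k S₁ w i))
      (interior_mono (cutPiece_subset k S₂ w j))
  · exact hS.symm.mono (interior_mono (cutPiece_subset k S₂ w i))
      (interior_mono (cutPiece_subset k S₁ w j))
  · exact pairwise_disjoint_interior_cutPiece S₂ hw fun h => hij (congrArg _ h)

theorem isEquipartition_comp_equiv {ι : Type*} [Fintype ι] {n k : ℕ} (e : Fin n ≃ ι)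
    {μ : Measure (Euc d)} {D : ι → Set (Euc d)} (hclosed : ∀ p, IsClosed (D p))
    (hconvex : ∀ p, Convex ℝ (D p))
    (hdisj : Pairwise fun p q => Disjoint (interior (D p)) (interior (D q)))
    (hcover : ⋃ p, D p = univ) (hmeas : ∀ p, μ (D p) = (n : ℝ≥0∞)⁻¹)
    (hmeet : ∀ (v : Euc d) c, v ≠ 0 →
      {p | (Hyperplane v c ∩ interior (D p)).Nonempty}.ncard + k ≤ n) :
    IsEquipartition μ k (D ∘ e) := by
  refine ⟨⟨fun i => hclosed _, fun i => hconvex _, fun i j hij =>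
    disjoint_iff_inter_eq_empty.1 (hdisj (e.injective.ne hij)), ?_⟩, fun i => hmeas _,
    fun v c hv => ?_⟩
  · rw [← hcover]
    exact e.surjective.iUnion_comp D
  have hcompl : {i | Avoids (Hyperplane v c) ((D ∘ e) i)}ᶜ =
      e ⁻¹' {p | (Hyperplane v c ∩ interior (D p)).Nonempty} := by
    ext i
    simp [Avoids, Set.nonempty_iff_ne_empty]
  have hcard := ncard_add_ncard_compl {i | Avoids (Hyperplane v c) ((D ∘ e) i)}
  rw [hcompl, ncard_preimage_of_injective_subset_range e.injective (by simp),
    Nat.card_eq_fintype_card, Fintype.card_fin] at hcard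
  have := hmeet v c hv
  omega

section Plane

open Finset
open scoped Classical

lemma subsingleton_hyperplane_inter {v u : Euc 2} (hv : v ≠ 0) {c c' : ℝ}
    (h : ¬Hyperplane v c ⊆ Hyperplane u c') :
    (Hyperplane v c ∩ Hyperplane u c').Subsingleton := by
  rintro z ⟨hz, hzu⟩ z' ⟨hz', hz'u⟩
  obtain ⟨p, hp, hpu⟩ := not_subset.1 h
  have : Fact (finrank ℝ (Euc 2) = 1 + 1) := ⟨finrank_euclideanSpace_fin⟩
  have hperp : ∀ {x}, x ∈ Hyperplane v c → x - z ∈ (ℝ ∙ v)ᗮ := fun hx => by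
    rw [Submodule.mem_orthogonal_singleton_iff_inner_right, inner_sub_right, hx, hz, sub_self]
  have hpz : p - z ≠ 0 := fun h => hpu (sub_eq_zero.1 h ▸ hzu)
  obtain ⟨a, ha⟩ := (finrank_eq_one_iff_of_nonzero' (⟨p - z, hperp hp⟩ : (ℝ ∙ v)ᗮ)
    (by simpa using hpz)).1 (Submodule.finrank_orthogonal_span_singleton hv) ⟨z' - z, hperp hz'⟩
  have ha' : a • (p - z) = z' - z := congrArg Subtype.val ha
  have hinner := congrArg (fun x => ⟪u, x⟫) ha'
  simp only [inner_smul_right, inner_sub_right, show ⟪u, z⟫ = c' from hzu,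
    show ⟪u, z'⟫ = c' from hz'u, sub_self] at hinner
  rw [(mul_eq_zero.1 hinner).resolve_right (sub_ne_zero.2 hpu), zero_smul] at ha'
  exact (sub_eq_zero.1 ha'.symm).symm

lemma not_crossesWithin_and_crossesWithin {v : Euc 2} (hv : v ≠ 0) (c : ℝ) {u : Euc 2} {c' : ℝ}
    {U U' : Set (Euc 2)} (hUU' : Disjoint U U') :
    ¬(CrossesWithin (Hyperplane v c) (Hyperplane u c') U ∧
      CrossesWithin (Hyperplane v c) (Hyperplane u c') U') := by
  rintro ⟨⟨⟨z, ⟨hz, hzU⟩, hzH⟩, hvH⟩, ⟨⟨z', ⟨hz', hz'U⟩, hz'H⟩, -⟩⟩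
  have hzz' : z = z' := subsingleton_hyperplane_inter hv hvH ⟨hz, hzH⟩ ⟨hz', hz'H⟩
  exact disjoint_left.1 hUU' hzU (hzz' ▸ hz'U)

lemma card_crossesWithin_add_card_crossesWithin_le {v : Euc 2} (hv : v ≠ 0) (c : ℝ)
    {U U' : Set (Euc 2)} (hUU' : Disjoint U U') (k : ℕ) (w : ℕ → Euc 2 × ℝ) :
    #{j : Fin k | CrossesWithin (Hyperplane v c) (Hyperplane (w j).1 (w j).2) U} +
      #{j : Fin k | CrossesWithin (Hyperplane v c) (Hyperplane (w j).1 (w j).2) U'} ≤ k := by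
  rw [← card_union_of_disjoint (disjoint_filter.2 fun j _ h₁ h₂ =>
    not_crossesWithin_and_crossesWithin hv c hUU' ⟨h₁, h₂⟩)]
  exact (card_le_univ _).trans (Fintype.card_fin k).le

lemma ncard_meets_interior_sidePieces_le {v : Euc 2} (hv : v ≠ 0) (c : ℝ) {k : ℕ}
    {S₁ S₂ : Set (Euc 2)} (hS₁ : Convex ℝ S₁) (hS₂ : Convex ℝ S₂)
    (hS : Disjoint (interior S₁) (interior S₂)) {w : ℕ → Euc 2 × ℝ} (hw : ∀ j < k, (w j).1 ≠ 0) :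
    {p | (Hyperplane v c ∩ interior (sidePieces k S₁ S₂ w p)).Nonempty}.ncard ≤ k + 2 := by
  rw [ncard_eq_toFinset_card', toFinset_ofPred, card_filter, Fintype.sum_sum_type,
    ← card_filter, ← card_filter]
  have h₁ : #{i | (Hyperplane v c ∩ interior (sidePieces k S₁ S₂ w (.inl i))).Nonempty} ≤ _ :=
    card_meets_interior_cutPiece_le (convex_hyperplane v c) k w hS₁ subset_rfl hw
  have h₂ : #{i | (Hyperplane v c ∩ interior (sidePieces k S₁ S₂ w (.inr i))).Nonempty} ≤ _ :=
    card_meets_interior_cutPiece_le (convex_hyperplane v c) k w hS₂ subset_rfl hw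
  have h₃ := card_crossesWithin_add_card_crossesWithin_le hv c hS k w
  omega

theorem isEquipartition_sidePieces {μ : Measure (Euc 2)} {k : ℕ} {u : Euc 2} (hu : u ≠ 0)
    (c₀ : ℝ) {w : ℕ → Euc 2 × ℝ} (hw : ∀ j < k, (w j).1 ≠ 0)
    (hwμ : ∀ i ≤ k, μ (cutPiece k (HalfSpace (-u) (-c₀)) w i) = ((2 * k + 2 : ℕ) : ℝ≥0∞)⁻¹ ∧
      μ (cutPiece k (HalfSpace u c₀) w i) = ((2 * k + 2 : ℕ) : ℝ≥0∞)⁻¹) :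
    IsEquipartition μ k (sidePieces k (HalfSpace (-u) (-c₀)) (HalfSpace u c₀) w ∘
      (finCongr (by ring : 2 * k + 2 = k + 1 + (k + 1))).trans finSumFinEquiv.symm) := by
  have hS := disjoint_interior_halfSpace_neg hu c₀
  refine isEquipartition_comp_equiv _
    (Sum.rec (fun i => isClosed_cutPiece k (isClosed_halfSpace _ _) w i)
      fun i => isClosed_cutPiece k (isClosed_halfSpace _ _) w i)
    (Sum.rec (fun i => convex_cutPiece k (convex_halfSpace _ _) w i)
      fun i => convex_cutPiece k (convex_halfSpace _ _) w i)
    (pairwise_disjoint_interior_sidePieces hS hw) ?_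
    (Sum.rec (fun i => (hwμ i i.is_le).1) fun i => (hwμ i i.is_le).2) fun v c hv => ?_
  · rw [sidePieces, iUnion_sumElim, iUnion_cutPiece, iUnion_cutPiece,
      halfSpace_neg_union_halfSpace]
  · have := ncard_meets_interior_sidePieces_le hv c (convex_halfSpace _ _) (convex_halfSpace _ _)
      hS hw
    omega

end Plane

end Equipartition

open Equipartition

theorem N2_le_two_k_add_two_general (k : ℕ) (μ : Measure (Euc 2))
    (hμ : NiceMeasure 2 μ) :
    ∃ C : Fin (2 * k + 2) → Set (Euc 2), IsEquipartition μ k C := by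
  set t : ℝ≥0∞ := ((2 * k + 2 : ℕ) : ℝ≥0∞)⁻¹
  have hhalf : (k + 1 : ℝ≥0∞) * t + (k + 1) * t = 1 := by
    rw [← add_mul, show (k + 1 : ℝ≥0∞) + (k + 1) = ((2 * k + 2 : ℕ) : ℝ≥0∞) by push_cast; ring]
    exact ENNReal.mul_inv_cancel (by positivity) (ENNReal.natCast_ne_top _)
  obtain ⟨u, hu⟩ := exists_ne (0 : Euc 2)
  have hpath : JoinedIn {0}ᶜ (-u) u :=
    (isPathConnected_compl_singleton_of_one_lt_rank (by
      rw [← finrank_eq_rank, finrank_euclideanSpace_fin]; norm_num) 0).joinedIn _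
      (neg_ne_zero.2 hu) _ hu
  obtain ⟨c₀, h₁, h₂⟩ := exists_halfSpace_neg_measure_eq hμ hu hhalf
  obtain ⟨w, hw, hwμ⟩ := exists_cutPiece_measure_eq hμ hpath
    (ENNReal.inv_pos.2 (ENNReal.natCast_ne_top _)) (ENNReal.inv_ne_top.2 (by positivity)) k
    (isClosed_halfSpace _ _) (convex_halfSpace _ _) (measurableSet_halfSpace _ _) subset_rfl
    subset_rfl h₁ h₂
  exact ⟨_, isEquipartition_sidePieces hu c₀ hw hwμ⟩

/-- Corollary: any nice measure on ℝ² admits a convex equipartition into 2k+2 parts such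
that every line avoids at least k of the parts. -/
theorem N2_le_two_k_add_two (k : ℕ) (hk : 1 ≤ k) (μ : Measure (Euc 2))
    (hμ : NiceMeasure 2 μ) :
    ∃ C : Fin (2 * k + 2) → Set (Euc 2), IsEquipartition μ k C :=
  N2_le_two_k_add_two_general k μ hμ
end
end

section
/- Let d ≥ 1 and k ≥ 1 be integers and let C_1, …, C_n be convex subsets of ℝ^d, each with nonempty interior. If every hyperplane in ℝ^d avoids at least k of the sets C_1, …, C_n, then n ≥ d + k. -/
open MeasureTheory Set Metric
open scoped ENNReal
noncomputable section

/-!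
Pick a point in the interior of each set. Any `min n d` of these points lie on a common
hyperplane, and that hyperplane avoids none of the corresponding sets, so it avoids at most
`n - min n d` sets. Since it avoids at least `k ≥ 1` of them, `n > d` and `k ≤ n - d`.
-/

theorem exists_ne_zero_inner_eq_const_of_card_le {E : Type*} [NormedAddCommGroup E]
    [InnerProductSpace ℝ E] [FiniteDimensional ℝ E] (s : Finset E)
    (hE : 0 < Module.finrank ℝ E) (hs : s.card ≤ Module.finrank ℝ E) :
    ∃ v ≠ (0 : E), ∃ c : ℝ, ∀ x ∈ s, inner ℝ v x = c := by
  classical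
  have hspan : Module.finrank ℝ (vectorSpan ℝ (s : Set E)) < Module.finrank ℝ E := by
    rcases s.eq_empty_or_nonempty with rfl | hne
    · rwa [Finset.coe_empty, vectorSpan_empty, finrank_bot]
    · obtain ⟨m, hm⟩ : ∃ m, s.card = m + 1 := ⟨s.card - 1, by have := hne.card_pos; omega⟩
      have := finrank_vectorSpan_image_finset_le ℝ id s hm
      rw [Finset.image_id] at this
      omega
  have hperp : (vectorSpan ℝ (s : Set E))ᗮ ≠ ⊥ := fun h => by
    rw [Submodule.orthogonal_eq_bot_iff] at h
    rw [h, finrank_top] at hspan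
    exact hspan.false
  obtain ⟨v, hv, hv0⟩ := Submodule.exists_mem_ne_zero_of_ne_bot hperp
  refine ⟨v, hv0, ?_⟩
  rcases s.eq_empty_or_nonempty with rfl | ⟨x₀, hx₀⟩
  · exact ⟨0, by simp⟩
  refine ⟨inner ℝ v x₀, fun x hx => ?_⟩
  have h := Submodule.inner_right_of_mem_orthogonal
    (vsub_mem_vectorSpan ℝ (Finset.mem_coe.2 hx) (Finset.mem_coe.2 hx₀)) hv
  rw [vsub_eq_sub, real_inner_comm, inner_sub_right] at h
  linarith

theorem exists_hyperplane_ncard_avoids_le {d n : ℕ} (hd : 1 ≤ d) (C : Fin n → Set (Euc d))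
    (hint : ∀ i, (interior (C i)).Nonempty) :
    ∃ v : Euc d, ∃ c : ℝ, v ≠ 0 ∧ {i | Avoids (Hyperplane v c) (C i)}.ncard ≤ n - min n d := by
  classical
  choose x hx using hint
  obtain ⟨S, -, hS⟩ := Finset.exists_subset_card_eq (s := (Finset.univ : Finset (Fin n)))
    (n := min n d) (by simp)
  obtain ⟨v, hv, c, hc⟩ := exists_ne_zero_inner_eq_const_of_card_le (S.image x)
    (by rw [finrank_euclideanSpace_fin]; exact hd)
    (by simpa using Finset.card_image_le.trans (hS.le.trans (min_le_right n d)))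
  refine ⟨v, c, hv, ?_⟩
  have hsub : {i | Avoids (Hyperplane v c) (C i)} ⊆ ↑Sᶜ := by
    intro i hi
    rw [Finset.mem_coe, Finset.mem_compl]
    intro hiS
    exact (eq_empty_iff_forall_notMem.mp hi) (x i) ⟨hc _ (Finset.mem_image_of_mem x hiS), hx i⟩
  calc {i | Avoids (Hyperplane v c) (C i)}.ncard ≤ (↑Sᶜ : Set (Fin n)).ncard := ncard_le_ncard hsub
    _ = n - min n d := by rw [ncard_coe_finset, Finset.card_compl, Fintype.card_fin, hS]

theorem n_ge_d_add_k_general (d k n : ℕ) (hd : 1 ≤ d) (hk : 1 ≤ k)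
    (C : Fin n → Set (Euc d))
    (hint : ∀ i, (interior (C i)).Nonempty)
    (havoid : ∀ v : Euc d, ∀ c : ℝ, v ≠ 0 →
      k ≤ {i | Avoids (Hyperplane v c) (C i)}.ncard) :
    d + k ≤ n := by
  obtain ⟨v, c, hv, hle⟩ := exists_hyperplane_ncard_avoids_le hd C hint
  have := havoid v c hv
  omega

/-- If every hyperplane in ℝ^d avoids at least k of n convex sets with nonempty interior,
then n ≥ d + k. -/
theorem n_ge_d_add_k (d k n : ℕ) (hd : 1 ≤ d) (hk : 1 ≤ k)
    (C : Fin n → Set (Euc d)) (hconv : ∀ i, Convex ℝ (C i))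
    (hint : ∀ i, (interior (C i)).Nonempty)
    (havoid : ∀ v : Euc d, ∀ c : ℝ, v ≠ 0 →
      k ≤ {i | Avoids (Hyperplane v c) (C i)}.ncard) :
    d + k ≤ n :=
  n_ge_d_add_k_general d k n hd hk C hint havoid
end
end

section
/- Let d ≥ 1, α ≥ 0 and 0 ≤ ρ ≤ 1, and let μ1, μ2 be nice measures on S^d. Let (I, ν) be a probability space and let (A_i)_{i ∈ I} be a family of closed connected subsets of S^d such that: μ1(A_i) ≥ α for every i ∈ I; the set {(i, b) ∈ I × S^d : there exists a ∈ A_i with a·b = 0} is measurable with respect to the product of ν and σ_d; and for every b ∈ S^d, ν({i ∈ I : there exists a ∈ A_i with a·b = 0}) ≤ ρ. Then there exist i ∈ I and a set B ⊆ S^d with μ2(B) ≥ (1 − ρ)/2 such that either a·b ≥ 0 for all a ∈ A_i, b ∈ B, or a·b ≤ 0 for all a ∈ A_i, b ∈ B. -/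
open MeasureTheory Set Metric
open scoped ENNReal
noncomputable section

abbrev Sph (d : ℕ) := Metric.sphere (0 : EuclideanSpace ℝ (Fin (d + 1))) 1

/-- `σ_d`: the rotation-invariant (uniform) probability measure on the sphere `S^d`,
obtained by normalizing the surface measure induced by Lebesgue measure. -/
def sphMeasure (d : ℕ) : Measure (Sph d) :=
  ((volume : Measure (EuclideanSpace ℝ (Fin (d + 1)))).toSphere Set.univ)⁻¹ •
    (volume : Measure (EuclideanSpace ℝ (Fin (d + 1)))).toSphere

/-- `h_d(t)`: the `σ_d`-measure of a spherical cap of `S^d` with central angle `t`. -/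
def capMeasure (d : ℕ) (t : ℝ) : ℝ≥0∞ :=
  sphMeasure d {x : Sph d |
    Real.cos t ≤ inner (𝕜 := ℝ) (x : EuclideanSpace ℝ (Fin (d + 1))) (EuclideanSpace.single 0 1)}

/-- A nice measure on `S^d`: a probability measure with a continuous strictly positive
density with respect to `σ_d`. -/
def NiceSphMeasure (d : ℕ) (μ : Measure (Sph d)) : Prop :=
  IsProbabilityMeasure μ ∧ ∃ f : Sph d → ℝ, Continuous f ∧ (∀ x, 0 < f x) ∧
    μ = (sphMeasure d).withDensity (fun x => ENNReal.ofReal (f x))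

/-- The set `C_d` of pairs `(α, β)` such that for any two nice measures `μ1, μ2` on `S^d`
there are sets `A, B` with `μ1 A ≥ α`, `μ2 B ≥ β` on which the inner product has constant sign. -/
def CSet (d : ℕ) : Set (ℝ × ℝ) :=
  {p | 0 ≤ p.1 ∧ 0 ≤ p.2 ∧
    ∀ μ1 μ2 : Measure (Sph d), NiceSphMeasure d μ1 → NiceSphMeasure d μ2 →
      ∃ A B : Set (Sph d), ENNReal.ofReal p.1 ≤ μ1 A ∧ ENNReal.ofReal p.2 ≤ μ2 B ∧
        ((∀ a ∈ A, ∀ b ∈ B, 0 ≤ inner (𝕜 := ℝ) (a : EuclideanSpace ℝ (Fin (d + 1)))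
            (b : EuclideanSpace ℝ (Fin (d + 1)))) ∨
         (∀ a ∈ A, ∀ b ∈ B, inner (𝕜 := ℝ) (a : EuclideanSpace ℝ (Fin (d + 1)))
            (b : EuclideanSpace ℝ (Fin (d + 1))) ≤ 0))}

/-- Main lemma for producing pairs in C_d: if a family of closed connected sets indexed
by a probability space (I, ν) has μ1-measure at least α in each member, and every point
b ∈ S^d has its "orthogonal" index set of ν-measure at most ρ, then some member A_i
admits a set B of μ2-measure at least (1−ρ)/2 on which the inner product with A_i has
constant sign. -/
theorem pairs_lemma (d : ℕ) (hd : 1 ≤ d) (α ρ : ℝ) (hα : 0 ≤ α) (hρ0 : 0 ≤ ρ) (hρ1 : ρ ≤ 1)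
    (μ1 μ2 : Measure (Sph d)) (hμ1 : NiceSphMeasure d μ1) (hμ2 : NiceSphMeasure d μ2)
    {I : Type} [MeasurableSpace I] (ν : Measure I) [IsProbabilityMeasure ν]
    (A : I → Set (Sph d)) (hclosed : ∀ i, IsClosed (A i)) (hconn : ∀ i, IsConnected (A i))
    (hmem : ∀ i, ENNReal.ofReal α ≤ μ1 (A i))
    (hmeasset : MeasurableSet {p : I × Sph d | ∃ a ∈ A p.1,
      inner (𝕜 := ℝ) (a : EuclideanSpace ℝ (Fin (d + 1)))
        (p.2 : EuclideanSpace ℝ (Fin (d + 1))) = 0})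
    (hρ : ∀ b : Sph d, ν {i | ∃ a ∈ A i,
      inner (𝕜 := ℝ) (a : EuclideanSpace ℝ (Fin (d + 1)))
        (b : EuclideanSpace ℝ (Fin (d + 1))) = 0} ≤ ENNReal.ofReal ρ) :
    ∃ i : I, ∃ B : Set (Sph d), ENNReal.ofReal ((1 - ρ) / 2) ≤ μ2 B ∧
      ((∀ a ∈ A i, ∀ b ∈ B, 0 ≤ inner (𝕜 := ℝ) (a : EuclideanSpace ℝ (Fin (d + 1)))
          (b : EuclideanSpace ℝ (Fin (d + 1)))) ∨
       (∀ a ∈ A i, ∀ b ∈ B, inner (𝕜 := ℝ) (a : EuclideanSpace ℝ (Fin (d + 1)))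
          (b : EuclideanSpace ℝ (Fin (d + 1))) ≤ 0)) := by
  classical
  obtain ⟨hprob2, -⟩ := hμ2
  haveI := hprob2
  set S : Set (I × Sph d) := {p : I × Sph d | ∃ a ∈ A p.1,
      inner (𝕜 := ℝ) (a : EuclideanSpace ℝ (Fin (d + 1)))
        (p.2 : EuclideanSpace ℝ (Fin (d + 1))) = 0} with hSdef
  -- Step 1: find i with μ2 of the orthogonal slice ≤ ρ
  have hmeas_slice : Measurable fun i => μ2 (Prod.mk i ⁻¹' S) :=
    measurable_measure_prodMk_left hmeasset
  have hfub : ∫⁻ i, μ2 (Prod.mk i ⁻¹' S) ∂ν ≤ ENNReal.ofReal ρ := by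
    rw [← Measure.prod_apply hmeasset, Measure.prod_apply_symm hmeasset]
    calc ∫⁻ b, ν ((fun i => (i, b)) ⁻¹' S) ∂μ2
        ≤ ∫⁻ _, ENNReal.ofReal ρ ∂μ2 := by
          refine lintegral_mono fun b => ?_
          have h := hρ b
          have : ((fun i => (i, b)) ⁻¹' S) = {i | ∃ a ∈ A i,
              inner (𝕜 := ℝ) (a : EuclideanSpace ℝ (Fin (d + 1)))
                (b : EuclideanSpace ℝ (Fin (d + 1))) = 0} := rfl
          rw [this]; exact h
      _ = ENNReal.ofReal ρ := by simp
  have hex : ∃ i, μ2 (Prod.mk i ⁻¹' S) ≤ ENNReal.ofReal ρ := by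
    by_contra h
    push_neg at h
    have hlt : ∫⁻ _, ENNReal.ofReal ρ ∂ν < ∫⁻ i, μ2 (Prod.mk i ⁻¹' S) ∂ν := by
      refine lintegral_strict_mono (IsProbabilityMeasure.ne_zero ν)
        hmeas_slice.aemeasurable ?_ (Filter.Eventually.of_forall h)
      simp
    rw [lintegral_const, measure_univ, mul_one] at hlt
    exact absurd hfub (not_le.mpr hlt)
  obtain ⟨i, hi⟩ := hex
  -- Step 2: cover the complement of the orthogonal slice by two constant-sign sets
  set Bp : Set (Sph d) := {b | ∀ a ∈ A i, 0 ≤ inner (𝕜 := ℝ)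
      (a : EuclideanSpace ℝ (Fin (d + 1))) (b : EuclideanSpace ℝ (Fin (d + 1)))} with hBp
  set Bm : Set (Sph d) := {b | ∀ a ∈ A i, inner (𝕜 := ℝ)
      (a : EuclideanSpace ℝ (Fin (d + 1))) (b : EuclideanSpace ℝ (Fin (d + 1))) ≤ 0} with hBm
  have hcover : (Prod.mk i ⁻¹' S)ᶜ ⊆ Bp ∪ Bm := by
    intro b hb
    have hb' : ¬∃ a ∈ A i, inner (𝕜 := ℝ) (a : EuclideanSpace ℝ (Fin (d + 1)))
        (b : EuclideanSpace ℝ (Fin (d + 1))) = 0 := hb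
    push_neg at hb'
    set g : Sph d → ℝ := fun a => inner (𝕜 := ℝ) (a : EuclideanSpace ℝ (Fin (d + 1)))
        (b : EuclideanSpace ℝ (Fin (d + 1))) with hg
    have hgc : ContinuousOn g (A i) :=
      (Continuous.inner continuous_subtype_val continuous_const).continuousOn
    have himg : IsConnected (g '' A i) := (hconn i).image g hgc
    have hno : ∀ a ∈ A i, g a ≠ 0 := hb'
    have hoc : (g '' A i).OrdConnected := himg.isPreconnected.ordConnected
    have hkey : (∀ a ∈ A i, 0 ≤ g a) ∨ (∀ a ∈ A i, g a ≤ 0) := by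
      by_contra hcon
      push_neg at hcon
      obtain ⟨⟨a1, ha1, ha1'⟩, a2, ha2, ha2'⟩ := hcon
      have h1 : g a1 < 0 := ha1'
      have h2 : 0 < g a2 := ha2'
      have : (0 : ℝ) ∈ g '' A i := by
        have := hoc.out (Set.mem_image_of_mem g ha1) (Set.mem_image_of_mem g ha2)
        exact this ⟨h1.le, h2.le⟩
      obtain ⟨a, ha, ha0⟩ := this
      exact hno a ha ha0
    rcases hkey with h | h
    · exact Or.inl h
    · exact Or.inr h
  -- Step 3: measure estimates
  have hOmeas : MeasurableSet (Prod.mk i ⁻¹' S) := measurable_prodMk_left hmeasset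
  have hcompl : ENNReal.ofReal (1 - ρ) ≤ μ2 (Prod.mk i ⁻¹' S)ᶜ := by
    rw [prob_compl_eq_one_sub hOmeas]
    have : ENNReal.ofReal (1 - ρ) = 1 - ENNReal.ofReal ρ := by
      rw [ENNReal.ofReal_sub 1 hρ0, ENNReal.ofReal_one]
    rw [this]
    exact tsub_le_tsub_left hi 1
  by_contra hfin
  have hp' : μ2 Bp < ENNReal.ofReal ((1 - ρ) / 2) := by
    by_contra h
    exact hfin ⟨i, Bp, le_of_not_gt h, Or.inl fun a ha b hb => hb a ha⟩
  have hm' : μ2 Bm < ENNReal.ofReal ((1 - ρ) / 2) := by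
    by_contra h
    exact hfin ⟨i, Bm, le_of_not_gt h, Or.inr fun a ha b hb => hb a ha⟩
  have h12 : (0:ℝ) ≤ (1 - ρ) / 2 := by linarith
  have hsum : ENNReal.ofReal (1 - ρ) ≤ μ2 Bp + μ2 Bm :=
    le_trans (le_trans hcompl (measure_mono hcover)) (measure_union_le _ _)
  have hlt2 : μ2 Bp + μ2 Bm < ENNReal.ofReal (1 - ρ) := by
    have : ENNReal.ofReal (1 - ρ) = ENNReal.ofReal ((1 - ρ)/2) + ENNReal.ofReal ((1 - ρ)/2) := by
      rw [← ENNReal.ofReal_add h12 h12]; ring_nf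
    rw [this]
    exact ENNReal.add_lt_add hp' hm'
  exact absurd hsum (not_le.mpr hlt2)
end
end
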